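/- A word w over the alphabet {H, U, D} with n occurrences of each letter is an S-Motzkin path if and only if, for every prefix p of w: (#U in p) ≤ (#H in p) ≤ (#U in p) + 1 and (#D in p) ≤ (#U in p). In particular the conditions of being a Motzkin path (nonnegative height) follow from these prefix inequalities. -/

import Mathlib

/-- The three step types of a Motzkin path: H = (1,0), U = (1,1), D = (1,-1). -/
inductive Step : Type | H | U | D
deriving DecidableEq, Repr

/-- Between every two consecutive H steps there is exactly one U step. -/
def OneUBetweenH (w : List Step) : Prop :=
  ∀ p mid s : List Step, w = p ++ Step.H :: mid ++ Step.H :: s →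
    Step.H ∉ mid → mid.count Step.U = 1

/-- The k-th D step occurs after at least k H steps and at least k U steps. -/
def DCond (w : List Step) : Prop :=
  ∀ p s : List Step, w = p ++ Step.D :: s →
    p.count Step.D + 1 ≤ p.count Step.H ∧ p.count Step.D + 1 ≤ p.count Step.U

/-- A Motzkin path: every prefix has #U ≥ #D, and the total height is 0. -/
def IsMotzkin (w : List Step) : Prop :=
  w.count Step.U = w.count Step.D ∧
  ∀ p : List Step, p <+: w → p.count Step.D ≤ p.count Step.U

/-- An S-Motzkin path of length 3n (original definition): a Motzkin path with n steps
of each type, starting with H, with exactly one U between consecutive H steps,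
and where the k-th D occurs after at least k H steps and k U steps. -/
def IsSMotzkin (n : ℕ) (w : List Step) : Prop :=
  IsMotzkin w ∧ w.count Step.H = n ∧ w.count Step.U = n ∧ w.count Step.D = n ∧
  (w ≠ [] → w.head? = some Step.H) ∧ OneUBetweenH w ∧ DCond w

/-!
Reading the word from left to right, the head and `OneUBetweenH` conditions say that H and U
steps alternate, starting with H: induction over the H steps shows that every H is preceded by
equally many U's and H's, and since there are as many U's as H's in total, at most one U
follows the last H of any prefix. Hence `#U ≤ #H ≤ #U + 1` on prefixes, and conversely this
squeeze forces the alternation, a leading D being excluded by `#D ≤ #U`. The k-th D condition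
is the prefix inequality `#D ≤ #U` read just before each D, the bound by `#H` then coming for
free from `#U ≤ #H`. Finally, `#D ≤ #U` on prefixes together with `#U = #D = n` is the
Motzkin condition.
-/

open Step

lemma List.eq_append_cons_of_mem_last {α : Type*} {a : α} {l : List α} (h : a ∈ l) :
    ∃ s t, l = s ++ a :: t ∧ a ∉ t := by
  obtain ⟨s, t, hl, ht⟩ := List.eq_append_cons_of_mem (List.mem_reverse.2 h)
  refine ⟨t.reverse, s.reverse, ?_, by simpa using ht⟩
  rw [← List.reverse_reverse l, hl]
  simp

section

variable {w : List Step}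

lemma eq_nil_of_prefix_of_H_not_mem (hhead : w ≠ [] → w.head? = some H) {p : List Step}
    (hp : p <+: w) (hH : H ∉ p) : p = [] := by
  obtain ⟨s, rfl⟩ := hp
  cases p with
  | nil => rfl
  | cons x p =>
    obtain rfl : x = H := by simpa using hhead (by simp)
    simp at hH

lemma count_U_eq_count_H_of_eq_append_H (hhead : w ≠ [] → w.head? = some H)
    (hone : OneUBetweenH w) (q s : List Step) (hw : w = q ++ H :: s) :
    q.count U = q.count H := by
  by_cases hHq : H ∈ q
  · obtain ⟨q₁, r, rfl, hr⟩ := List.eq_append_cons_of_mem_last hHq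
    have ih := count_U_eq_count_H_of_eq_append_H hhead hone q₁ (r ++ H :: s) (by simp [hw])
    have hrU : r.count U = 1 := hone q₁ r s (by simp [hw]) hr
    simp [List.count_append, ih, hrU, List.count_eq_zero.2 hr]
  · obtain rfl := eq_nil_of_prefix_of_H_not_mem hhead ⟨_, hw.symm⟩ hHq
    rfl
termination_by q.length

lemma count_U_le_one_of_eq_append_H (hhead : w ≠ [] → w.head? = some H)
    (hone : OneUBetweenH w) (hHU : w.count H = w.count U) {q r s : List Step}
    (hw : w = q ++ H :: r ++ s) (hr : H ∉ r) : r.count U ≤ 1 := by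
  by_cases hHs : H ∈ s
  · obtain ⟨s₁, s₂, rfl, hs₁⟩ := List.eq_append_cons_of_mem hHs
    have := hone q (r ++ s₁) s₂ (by simp [hw]) (by simp [hr, hs₁])
    rw [List.count_append] at this
    omega
  · have hq := count_U_eq_count_H_of_eq_append_H hhead hone q (r ++ s) (by simp [hw])
    subst hw
    simp [List.count_append, List.count_eq_zero.2 hr, List.count_eq_zero.2 hHs] at hHU
    omega

lemma prefix_squeeze_of_headH_of_oneUBetweenH (hhead : w ≠ [] → w.head? = some H)
    (hone : OneUBetweenH w) (hHU : w.count H = w.count U) :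
    ∀ p, p <+: w → p.count U ≤ p.count H ∧ p.count H ≤ p.count U + 1 := by
  rintro p ⟨s, rfl⟩
  by_cases hHp : H ∈ p
  · obtain ⟨q, r, rfl, hr⟩ := List.eq_append_cons_of_mem_last hHp
    have hq := count_U_eq_count_H_of_eq_append_H hhead hone q (r ++ s) (by simp)
    have hrU := count_U_le_one_of_eq_append_H hhead hone hHU (q := q) (s := s) (by simp) hr
    simp [List.count_append, List.count_eq_zero.2 hr]
    omega
  · simp [eq_nil_of_prefix_of_H_not_mem hhead (List.prefix_append p s) hHp]

lemma oneUBetweenH_of_prefix_squeeze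
    (hin : ∀ p, p <+: w → p.count U ≤ p.count H ∧ p.count H ≤ p.count U + 1) :
    OneUBetweenH w := by
  intro p mid s hw hmid
  -- just before an H the squeeze forces `#U = #H`; comparing the two H's gives `#U mid = 1`
  have h₀ := hin p ⟨H :: mid ++ H :: s, by simp [hw]⟩
  have h₁ := hin (p ++ [H]) ⟨mid ++ H :: s, by simp [hw]⟩
  have h₂ := hin (p ++ H :: mid) ⟨H :: s, by simp [hw]⟩
  have h₃ := hin (p ++ H :: mid ++ [H]) ⟨s, by simp [hw]⟩
  simp [List.count_append, List.count_eq_zero.2 hmid] at h₀ h₁ h₂ h₃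
  omega

lemma head_eq_H_of_prefix_ineqs (hUH : ∀ p, p <+: w → p.count U ≤ p.count H)
    (hDU : ∀ p, p <+: w → p.count D ≤ p.count U) (hne : w ≠ []) : w.head? = some H := by
  obtain ⟨x, t, rfl⟩ := List.exists_cons_of_ne_nil hne
  have hU := hUH [x] ⟨t, rfl⟩
  have hD := hDU [x] ⟨t, rfl⟩
  cases x <;> simp_all

lemma dCond_iff (hUH : ∀ p, p <+: w → p.count U ≤ p.count H) :
    DCond w ↔ ∀ p, p <+: w → p.count D ≤ p.count U := by
  constructor
  · rintro hd p ⟨s, rfl⟩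
    by_cases hDp : D ∈ p
    · obtain ⟨q, r, rfl, hr⟩ := List.eq_append_cons_of_mem_last hDp
      have := (hd q (r ++ s) (by simp)).2
      simp [List.count_append, List.count_eq_zero.2 hr]
      omega
    · simp [List.count_eq_zero.2 hDp]
  · intro hin p s hw
    have h₀ := hUH p ⟨D :: s, hw.symm⟩
    have h₁ := hin (p ++ [D]) ⟨s, by simp [hw]⟩
    simp [List.count_append] at h₁
    omega

end

theorem smotzkin_iff_prefix_ineqs (n : ℕ) (w : List Step)
    (hH : w.count Step.H = n) (hU : w.count Step.U = n) (hD : w.count Step.D = n) :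
    (((w ≠ [] → w.head? = some Step.H) ∧ OneUBetweenH w ∧ DCond w) ↔
      (∀ p : List Step, p <+: w →
        p.count Step.U ≤ p.count Step.H ∧ p.count Step.H ≤ p.count Step.U + 1 ∧
          p.count Step.D ≤ p.count Step.U)) ∧
    ((∀ p : List Step, p <+: w →
        p.count Step.U ≤ p.count Step.H ∧ p.count Step.H ≤ p.count Step.U + 1 ∧
          p.count Step.D ≤ p.count Step.U) → IsMotzkin w) := by
  have hHU : w.count H = w.count U := hH.trans hU.symm
  refine ⟨⟨fun ⟨hhead, hone, hd⟩ p hp => ?_, fun hin => ?_⟩,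
    fun hin => ⟨hU.trans hD.symm, fun p hp => (hin p hp).2.2⟩⟩
  · have hsq := prefix_squeeze_of_headH_of_oneUBetweenH hhead hone hHU
    exact ⟨(hsq p hp).1, (hsq p hp).2, (dCond_iff fun q hq => (hsq q hq).1).1 hd p hp⟩
  · have hUH : ∀ p, p <+: w → p.count U ≤ p.count H := fun p hp => (hin p hp).1
    have hDU : ∀ p, p <+: w → p.count D ≤ p.count U := fun p hp => (hin p hp).2.2
    exact ⟨head_eq_H_of_prefix_ineqs hUH hDU,
      oneUBetweenH_of_prefix_squeeze fun p hp => ⟨(hin p hp).1, (hin p hp).2.1⟩,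
      (dCond_iff hUH).2 hDU⟩
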